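/- arXiv:1307.3123 — 6 statements merged into one kernel-verified Lean document; each statement's English description precedes it below -/
import Mathlib

section
/- Let T be a finite forest that is at most trivalent (every vertex has degree at most 3) with an even number 2N of edges. Then the line graph perfect matching is unique: there is exactly one perfect matching of the edges of T into adjacent pairs (pairs of edges sharing a vertex). -/
/-!
Induct on the number of edges. An end `a` of a longest path `a, u, t, …` in the forest is a
leaf, and so is every neighbour of `u` other than `t`. If `u` is a leaf too, the component of
`a` is a single edge, which has odd size. Otherwise either `u` has a second leaf neighbour `z`
(its third neighbour, if any, is `t`), and then `au` must be paired with `zu`, since pairing it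
with `ut` would leave `zu` without a partner; or `u` has degree two, and `au` can only be paired
with `ut`. Deleting this forced pair isolates two vertices and removes two edges from one
component, so the smaller forest satisfies the hypotheses, and its unique pairing extends
uniquely.
-/

open SimpleGraph

section Development

variable {V : Type*}

def EdgesMeet (e f : Sym2 V) : Prop := ∃ v, v ∈ e ∧ v ∈ f

theorem EdgesMeet.symm {e f : Sym2 V} (h : EdgesMeet e f) : EdgesMeet f e :=
  let ⟨v, he, hf⟩ := h; ⟨v, hf, he⟩

/-- A perfect matching of the line graph on the edge set `E`. -/
def IsAdjPairing [DecidableEq V] (E : Finset (Sym2 V)) (M : Finset (Finset (Sym2 V))) : Prop :=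
  (∀ p ∈ M, ∃ e f, e ∈ E ∧ f ∈ E ∧ e ≠ f ∧ p = {e, f} ∧ EdgesMeet e f) ∧
    ∀ e ∈ E, ∃! p, p ∈ M ∧ e ∈ p

section Pairing

variable [DecidableEq V] {E : Finset (Sym2 V)} {M : Finset (Finset (Sym2 V))}
  {p q : Finset (Sym2 V)} {e f f' g e₁ e₂ : Sym2 V}

namespace IsAdjPairing

theorem mem_of_mem (h : IsAdjPairing E M) (hp : p ∈ M) (he : e ∈ p) : e ∈ E := by
  obtain ⟨a, b, ha, hb, -, rfl, -⟩ := h.1 p hp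
  obtain rfl | rfl : e = a ∨ e = b := by simpa using he
  exacts [ha, hb]

theorem eq_of_mem_of_mem (h : IsAdjPairing E M) (hp : p ∈ M) (hq : q ∈ M) (hep : e ∈ p)
    (heq : e ∈ q) : p = q :=
  (h.2 e (h.mem_of_mem hp hep)).unique ⟨hp, hep⟩ ⟨hq, heq⟩

theorem ne_of_pair_mem (h : IsAdjPairing E M) (hp : {e, f} ∈ M) : e ≠ f := by
  rintro rfl
  obtain ⟨a, b, -, -, hab, hpab, -⟩ := h.1 _ hp
  have := congrArg Finset.card hpab
  simp [Finset.card_pair hab] at this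

theorem exists_pair_mem (h : IsAdjPairing E M) (he : e ∈ E) :
    ∃ f ∈ E, f ≠ e ∧ EdgesMeet e f ∧ {e, f} ∈ M := by
  obtain ⟨p, ⟨hp, hep⟩, -⟩ := h.2 e he
  obtain ⟨a, b, ha, hb, hab, rfl, hmeet⟩ := h.1 p hp
  obtain rfl | rfl : e = a ∨ e = b := by simpa using hep
  · exact ⟨b, hb, hab.symm, hmeet, hp⟩
  · exact ⟨a, ha, hab, hmeet.symm, by rwa [Finset.pair_comm]⟩

theorem eq_of_pair_mem (h : IsAdjPairing E M) (hf : {e, f} ∈ M) (hf' : {e, f'} ∈ M) :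
    f = f' := by
  have hpq := h.eq_of_mem_of_mem hf hf' (Finset.mem_insert_self _ _) (Finset.mem_insert_self _ _)
  have hmem : f ∈ ({e, f'} : Finset (Sym2 V)) := hpq ▸ Finset.mem_insert_of_mem (by simp)
  exact (by simpa using hmem : f = e ∨ f = f').resolve_left (h.ne_of_pair_mem hf).symm

theorem pair_mem_of_edgesMeet_eq (h : IsAdjPairing E M) (he₁ : e₁ ∈ E)
    (h₁ : ∀ f ∈ E, f ≠ e₁ → EdgesMeet e₁ f → f = e₂) : {e₁, e₂} ∈ M := by
  obtain ⟨f, hf, hfe, hmeet, hpair⟩ := h.exists_pair_mem he₁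
  rwa [← h₁ f hf hfe hmeet]

theorem pair_mem_of_edgesMeet_eq_or_eq (h : IsAdjPairing E M) (he₁ : e₁ ∈ E) (he₂ : e₂ ∈ E)
    (hne : e₁ ≠ e₂) (h₁ : ∀ f ∈ E, f ≠ e₁ → EdgesMeet e₁ f → f = e₂ ∨ f = g)
    (h₂ : ∀ f ∈ E, f ≠ e₂ → EdgesMeet e₂ f → f = e₁ ∨ f = g) : {e₁, e₂} ∈ M := by
  obtain ⟨f₁, hf₁, hfe₁, hm₁, hp₁⟩ := h.exists_pair_mem he₁
  obtain ⟨f₂, hf₂, hfe₂, hm₂, hp₂⟩ := h.exists_pair_mem he₂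
  rcases h₁ f₁ hf₁ hfe₁ hm₁ with rfl | rfl
  · exact hp₁
  rcases h₂ f₂ hf₂ hfe₂ hm₂ with rfl | rfl
  · rwa [Finset.pair_comm]
  · rw [Finset.pair_comm] at hp₁ hp₂
    exact absurd (h.eq_of_pair_mem hp₁ hp₂) hne

theorem insert_pair (h : IsAdjPairing (E \ {e₁, e₂}) M) (he₁ : e₁ ∈ E) (he₂ : e₂ ∈ E)
    (hne : e₁ ≠ e₂) (hmeet : EdgesMeet e₁ e₂) : IsAdjPairing E (insert {e₁, e₂} M) := by
  refine ⟨fun p hp => ?_, fun e he => ?_⟩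
  · rcases Finset.mem_insert.1 hp with rfl | hp
    · exact ⟨e₁, e₂, he₁, he₂, hne, rfl, hmeet⟩
    · obtain ⟨a, b, ha, hb, hab, rfl, hm⟩ := h.1 p hp
      exact ⟨a, b, Finset.sdiff_subset ha, Finset.sdiff_subset hb, hab, rfl, hm⟩
  by_cases he' : e ∈ ({e₁, e₂} : Finset (Sym2 V))
  · refine ⟨{e₁, e₂}, ⟨Finset.mem_insert_self _ _, he'⟩, fun q ⟨hq, heq⟩ => ?_⟩
    rcases Finset.mem_insert.1 hq with rfl | hq
    · rfl
    · exact absurd (Finset.mem_sdiff.1 (h.mem_of_mem hq heq)).2 (not_not.2 he')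
  · obtain ⟨p, ⟨hp, hep⟩, hu⟩ := h.2 e (Finset.mem_sdiff.2 ⟨he, he'⟩)
    refine ⟨p, ⟨Finset.mem_insert_of_mem hp, hep⟩, fun q ⟨hq, heq⟩ => ?_⟩
    rcases Finset.mem_insert.1 hq with rfl | hq
    · exact absurd heq he'
    · exact hu q ⟨hq, heq⟩

theorem erase_pair (h : IsAdjPairing E M) (hp : {e₁, e₂} ∈ M) :
    IsAdjPairing (E \ {e₁, e₂}) (M.erase {e₁, e₂}) := by
  refine ⟨fun q hq => ?_, fun e he => ?_⟩
  · obtain ⟨hne, hqM⟩ := Finset.mem_erase.1 hq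
    have hmem : ∀ x ∈ q, x ∈ E \ {e₁, e₂} := fun x hx => Finset.mem_sdiff.2
      ⟨h.mem_of_mem hqM hx, fun hx' => hne (h.eq_of_mem_of_mem hqM hp hx hx')⟩
    obtain ⟨a, b, -, -, hab, rfl, hm⟩ := h.1 q hqM
    exact ⟨a, b, hmem a (by simp), hmem b (by simp), hab, rfl, hm⟩
  · obtain ⟨heE, he'⟩ := Finset.mem_sdiff.1 he
    obtain ⟨q, ⟨hq, heq⟩, hu⟩ := h.2 e heE
    exact ⟨q, ⟨Finset.mem_erase.2 ⟨fun hq' => he' (hq' ▸ heq), hq⟩, heq⟩,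
      fun r ⟨hr, her⟩ => hu r ⟨(Finset.mem_erase.1 hr).2, her⟩⟩

end IsAdjPairing

theorem existsUnique_isAdjPairing_empty : ∃! M, IsAdjPairing (∅ : Finset (Sym2 V)) M :=
  ⟨∅, ⟨by simp, by simp⟩, fun M hM => Finset.eq_empty_of_forall_notMem fun p hp => by
    obtain ⟨e, -, he, -⟩ := hM.1 p hp
    simp at he⟩

theorem existsUnique_isAdjPairing_of_forced (he₁ : e₁ ∈ E) (he₂ : e₂ ∈ E) (hne : e₁ ≠ e₂)
    (hmeet : EdgesMeet e₁ e₂) (hforced : ∀ M, IsAdjPairing E M → {e₁, e₂} ∈ M)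
    (h : ∃! M, IsAdjPairing (E \ {e₁, e₂}) M) : ∃! M, IsAdjPairing E M := by
  obtain ⟨M₀, hM₀, hu⟩ := h
  refine ⟨insert {e₁, e₂} M₀, hM₀.insert_pair he₁ he₂ hne hmeet, fun M hM => ?_⟩
  have hp := hforced M hM
  rw [← hu _ (hM.erase_pair hp), Finset.insert_erase hp]

end Pairing

section Graph

variable {W : Type*} {G : SimpleGraph V} {H : SimpleGraph W} {u v w a : V}

theorem SimpleGraph.Reachable.lift (r : V → W) (hr : ∀ v w, G.Adj v w → H.Reachable (r v) (r w))
    (h : G.Reachable v w) : H.Reachable (r v) (r w) := by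
  rw [reachable_iff_reflTransGen] at h ⊢
  exact Relation.ReflTransGen.lift' r (fun v w hvw => (reachable_iff_reflTransGen _ _).1
    (hr v w hvw)) v w h

theorem SimpleGraph.Reachable.mem_of_forall_adj_mem {S : Set V}
    (hS : ∀ v ∈ S, ∀ w, G.Adj v w → w ∈ S) (h : G.Reachable v w) (hv : v ∈ S) : w ∈ S := by
  rw [reachable_iff_reflTransGen] at h
  induction h with
  | refl => exact hv
  | tail _ hab ih => exact hS _ ih _ hab

theorem SimpleGraph.IsAcyclic.eq_snd_of_forall_length_le (hG : G.IsAcyclic) {p : G.Walk u v}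
    (hp : p.IsPath) (hmax : ∀ x y (q : G.Walk x y), q.IsPath → q.length ≤ p.length)
    (hw : G.Adj u w) : w = p.snd := by
  by_cases hws : w ∈ p.support
  · exact hG.eq_snd_of_adj_start hp hw hws
  · have := hmax _ _ _ ((Walk.cons_isPath_iff hw.symm p).2 ⟨hp, hws⟩)
    simp at this

/-- `a, u, t` are the first vertices of a longest path. -/
theorem SimpleGraph.IsAcyclic.exists_leaf [Finite V] (hG : G.IsAcyclic) {e : Sym2 V}
    (he : e ∈ G.edgeSet) : ∃ u a, G.Adj u a ∧ (∀ y, G.Adj a y → y = u) ∧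
      ((∀ y, G.Adj u y → y = a) ∨
        ∃ t, G.Adj u t ∧ t ≠ a ∧ ∀ z, G.Adj u z → z ≠ t → ∀ y, G.Adj z y → y = u) := by
  classical
  have := Fintype.ofFinite V
  induction e with | h x y =>
  have hxy : G.Adj x y := he
  obtain ⟨⟨a, b, p, hp⟩, -, hmax⟩ := Finset.exists_max_image Finset.univ
    (fun s : Σ a b, G.Path a b => s.2.2.1.length) ⟨⟨x, y, Path.singleton hxy⟩, Finset.mem_univ _⟩
  have hmax' : ∀ x y (q : G.Walk x y), q.IsPath → q.length ≤ p.length :=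
    fun x y q hq => hmax ⟨x, y, q, hq⟩ (Finset.mem_univ _)
  cases p with
  | nil => exact absurd (hmax' _ _ _ (Path.singleton hxy).2) (by simp [Path.singleton])
  | cons hau q =>
  refine ⟨_, a, hau.symm, fun y hy => by simpa using hG.eq_snd_of_forall_length_le hp hmax' hy, ?_⟩
  cases q with
  | nil =>
    have hp' := (Path.singleton hau.symm).2
    exact .inl fun y hy => by
      simpa using hG.eq_snd_of_forall_length_le hp' (by simpa using hmax') hy
  | cons hut r =>
    refine .inr ⟨_, hut, fun hta => ?_, fun z huz hzt y hzy => ?_⟩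
    · subst hta
      simp [Walk.cons_isPath_iff] at hp
    · have hr := hp.of_cons
      have hz : z ∉ (Walk.cons hut r).support := fun hz =>
        hzt (by simpa using hG.eq_snd_of_adj_start hr huz hz)
      have hp' := (Walk.cons_isPath_iff huz.symm _).2 ⟨hr, hz⟩
      simpa using hG.eq_snd_of_forall_length_le hp' (by simpa using hmax') hzy

theorem SimpleGraph.mem_of_subset_neighborFinset [Fintype (G.neighborSet u)] {s : Finset V}
    (hs : s ⊆ G.neighborFinset u) (hdeg : G.degree u ≤ s.card) (hy : G.Adj u v) : v ∈ s := by
  rw [Finset.eq_of_subset_of_card_le hs (by rwa [card_neighborFinset_eq_degree])]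
  exact (mem_neighborFinset _ _ _).2 hy

theorem SimpleGraph.exists_eq_of_edgesMeet_of_leaf (ha : ∀ y, G.Adj a y → y = u) {f : Sym2 V}
    (hf : f ∈ G.edgeSet) (hfa : f ≠ s(u, a)) (hmeet : EdgesMeet s(u, a) f) :
    ∃ y, G.Adj u y ∧ f = s(u, y) := by
  obtain ⟨v, hv, hvf⟩ := hmeet
  obtain ⟨y, rfl⟩ := Sym2.mem_iff_exists.1 hvf
  rcases Sym2.mem_iff.1 hv with rfl | rfl
  · exact ⟨y, hf, rfl⟩
  · exact absurd (by rw [ha y hf, Sym2.eq_swap]) hfa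

end Graph

section Parity

variable {G : SimpleGraph V} {a b u v x : V} {e e₁ e₂ : Sym2 V} {B : Set V} {D : Set (Sym2 V)}

def componentEdgeSet (c : G.ConnectedComponent) : Set (Sym2 V) :=
  {e ∈ G.edgeSet | ∀ v ∈ e, G.connectedComponentMk v = c}

def EvenComponents (G : SimpleGraph V) : Prop :=
  ∀ c : G.ConnectedComponent, Even (componentEdgeSet c).ncard

theorem mem_componentEdgeSet_iff {c : G.ConnectedComponent} (he : e ∈ G.edgeSet) (hv : v ∈ e) :
    e ∈ componentEdgeSet c ↔ G.connectedComponentMk v = c := by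
  refine ⟨fun h => h.2 v hv, fun h => ⟨he, fun w hw => ?_⟩⟩
  induction e with | h a b =>
  have hab := ConnectedComponent.connectedComponentMk_eq_of_adj (G := G) he
  rw [← h]
  rcases Sym2.mem_iff.1 hw with rfl | rfl <;> rcases Sym2.mem_iff.1 hv with rfl | rfl <;>
    simp [hab]

theorem not_evenComponents_of_adj_of_leaf (hab : G.Adj a b) (ha : ∀ y, G.Adj a y → y = b)
    (hb : ∀ y, G.Adj b y → y = a) : ¬ EvenComponents G := by
  have hS : ∀ v ∈ ({a, b} : Set V), ∀ w, G.Adj v w → w ∈ ({a, b} : Set V) := by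
    rintro v (rfl | rfl) w hw
    exacts [.inr (ha w hw), .inl (hb w hw)]
  have hcomp : componentEdgeSet (G.connectedComponentMk a) = {s(a, b)} := by
    ext e
    constructor
    · rintro ⟨he, hc⟩
      induction e with | h p q =>
      have hmem : ∀ w ∈ s(p, q), w ∈ ({a, b} : Set V) := fun w hw =>
        (ConnectedComponent.exact (hc w hw)).symm.mem_of_forall_adj_mem hS (.inl rfl)
      rcases hmem p (by simp) with rfl | rfl <;> rcases hmem q (by simp) with rfl | rfl
      · exact absurd he (G.irrefl)
      · rfl
      · simp [Sym2.eq_swap]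
      · exact absurd he (G.irrefl)
    · rintro rfl
      exact (mem_componentEdgeSet_iff hab (Sym2.mem_mk_left a b)).2 rfl
  intro h
  simpa [hcomp] using h (G.connectedComponentMk a)

/-- Collapsing `B` onto its only attachment point `x` turns `G`-walks into walks avoiding `D`. -/
theorem SimpleGraph.Reachable.deleteEdges_of_pendant (hD : ∀ e ∈ D, ∃ b ∈ B, b ∈ e)
    (hx : ∀ b ∈ B, ∀ y ∉ B, G.Adj b y → y = x) (h : G.Reachable u v) (hu : u ∉ B)
    (hv : v ∉ B) : (G.deleteEdges D).Reachable u v := by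
  classical
  let r : V → V := fun v => if v ∈ B then x else v
  have hcollapse : ∀ p q, G.Adj p q → p ∈ B → r p = r q := fun p q hpq hp => by
    by_cases hq : q ∈ B
    · simp [r, hp, hq]
    · simp [r, hp, hx p hp q hq hpq]
  have hr : ∀ p q, G.Adj p q → (G.deleteEdges D).Reachable (r p) (r q) := fun p q hpq => by
    by_cases hp : p ∈ B
    · rw [hcollapse p q hpq hp]
    by_cases hq : q ∈ B
    · rw [hcollapse q p hpq.symm hq]
    simp only [r, hp, hq, if_false]
    refine ((deleteEdges_adj ..).2 ⟨hpq, fun hpqD => ?_⟩).reachable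
    obtain ⟨b, hb, hbe⟩ := hD _ hpqD
    rcases Sym2.mem_iff.1 hbe with rfl | rfl
    exacts [hp hb, hq hb]
  simpa [r, hu, hv] using h.lift r hr

theorem componentEdgeSet_deleteEdges (hD : ∀ e ∈ D, ∃ b ∈ B, b ∈ e)
    (hB : ∀ b ∈ B, ∀ y, G.Adj b y → s(b, y) ∈ D) (hx : ∀ b ∈ B, ∀ y ∉ B, G.Adj b y → y = x)
    (hv : v ∉ B) :
    componentEdgeSet ((G.deleteEdges D).connectedComponentMk v) =
      componentEdgeSet (G.connectedComponentMk v) \ D := by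
  ext e
  simp only [componentEdgeSet, edgeSet_deleteEdges, Set.mem_sdiff, Set.mem_ofPred_eq,
    ConnectedComponent.eq]
  constructor
  · rintro ⟨⟨he, heD⟩, hr⟩
    exact ⟨⟨he, fun w hw => (hr w hw).mono (G.deleteEdges_le D)⟩, heD⟩
  · rintro ⟨⟨he, hr⟩, heD⟩
    refine ⟨⟨he, heD⟩, fun w hw => (hr w hw).deleteEdges_of_pendant hD hx (fun hwB => ?_) hv⟩
    obtain ⟨y, rfl⟩ := Sym2.mem_iff_exists.1 hw
    exact heD (hB w hwB y he)

theorem even_ncard_sdiff_pair {α : Type*} [Finite α] {S : Set α} {a b : α} (hS : Even S.ncard)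
    (hab : a ≠ b) (h : a ∈ S ↔ b ∈ S) : Even (S \ {a, b}).ncard := by
  by_cases ha : a ∈ S
  · have hsub : {a, b} ⊆ S := Set.insert_subset ha (Set.singleton_subset_iff.2 (h.1 ha))
    have hle := Set.ncard_le_ncard hsub
    rw [Set.ncard_pair hab] at hle
    rw [Set.ncard_sdiff hsub, Set.ncard_pair hab, Nat.even_sub hle]
    simp [hS]
  · rwa [sdiff_eq_left.2 (Set.disjoint_left.2 fun c hc hc' => ?_)]
    rcases hc' with rfl | rfl
    exacts [ha hc, ha (h.2 hc)]

theorem EvenComponents.deleteEdges_pair [Finite V] (h : EvenComponents G) (he₁ : e₁ ∈ G.edgeSet)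
    (he₂ : e₂ ∈ G.edgeSet) (hne : e₁ ≠ e₂) (hmeet : EdgesMeet e₁ e₂)
    (hD : ∀ e ∈ ({e₁, e₂} : Set (Sym2 V)), ∃ b ∈ B, b ∈ e)
    (hB : ∀ b ∈ B, ∀ y, G.Adj b y → s(b, y) ∈ ({e₁, e₂} : Set (Sym2 V)))
    (hx : ∀ b ∈ B, ∀ y ∉ B, G.Adj b y → y = x) : EvenComponents (G.deleteEdges {e₁, e₂}) := by
  intro c
  rcases (componentEdgeSet c).eq_empty_or_nonempty with hc | ⟨e, he, hec⟩
  · simp [hc]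
  induction e with | h v y =>
  rw [edgeSet_deleteEdges] at he
  have hvB : v ∉ B := fun hvB => he.2 (hB v hvB y he.1)
  rw [← hec v (Sym2.mem_mk_left v y), componentEdgeSet_deleteEdges hD hB hx hvB]
  obtain ⟨u, hu₁, hu₂⟩ := hmeet
  exact even_ncard_sdiff_pair (h _) hne
    (by rw [mem_componentEdgeSet_iff he₁ hu₁, mem_componentEdgeSet_iff he₂ hu₂])

end Parity

section Reduction

variable [DecidableEq V] {G : SimpleGraph V} {a u t z : V} {e₁ e₂ : Sym2 V}

structure IsRemovablePair (G : SimpleGraph V) [Fintype G.edgeSet] (e₁ e₂ : Sym2 V) : Prop where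
  mem₁ : e₁ ∈ G.edgeSet
  mem₂ : e₂ ∈ G.edgeSet
  ne : e₁ ≠ e₂
  edgesMeet : EdgesMeet e₁ e₂
  forced : ∀ M, IsAdjPairing G.edgeFinset M → {e₁, e₂} ∈ M
  evenComponents_deleteEdges : EvenComponents G → EvenComponents (G.deleteEdges {e₁, e₂})

theorem edgeFinset_deleteEdges_pair [Fintype G.edgeSet]
    [Fintype (G.deleteEdges {e₁, e₂}).edgeSet] :
    (G.deleteEdges {e₁, e₂}).edgeFinset = G.edgeFinset \ {e₁, e₂} := by
  ext
  simp

namespace IsRemovablePair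

variable [Fintype G.edgeSet] [Fintype (G.deleteEdges {e₁, e₂}).edgeSet]

theorem card_edgeFinset_deleteEdges_lt (h : IsRemovablePair G e₁ e₂) :
    (G.deleteEdges {e₁, e₂}).edgeFinset.card < G.edgeFinset.card := by
  rw [edgeFinset_deleteEdges_pair]
  exact Finset.card_lt_card (Finset.sdiff_ssubset
    (by simp [Finset.insert_subset_iff, h.mem₁, h.mem₂]) (by simp))

theorem existsUnique_isAdjPairing (h : IsRemovablePair G e₁ e₂)
    (h' : ∃! M, IsAdjPairing (G.deleteEdges {e₁, e₂}).edgeFinset M) :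
    ∃! M, IsAdjPairing G.edgeFinset M := by
  rw [edgeFinset_deleteEdges_pair] at h'
  exact existsUnique_isAdjPairing_of_forced (mem_edgeFinset.2 h.mem₁) (mem_edgeFinset.2 h.mem₂)
    h.ne h.edgesMeet h.forced h'

end IsRemovablePair

variable [Fintype G.edgeSet]

theorem isRemovablePair_of_cherry [Finite V] (hua : G.Adj u a) (huz : G.Adj u z) (haz : a ≠ z)
    (ha : ∀ y, G.Adj a y → y = u) (hz : ∀ y, G.Adj z y → y = u)
    (hu : ∀ y, G.Adj u y → y = a ∨ y = z ∨ y = t) : IsRemovablePair G s(u, a) s(u, z) where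
  mem₁ := hua
  mem₂ := huz
  ne := mt Sym2.congr_right.1 haz
  edgesMeet := ⟨u, Sym2.mem_mk_left _ _, Sym2.mem_mk_left _ _⟩
  forced M hM := by
    refine hM.pair_mem_of_edgesMeet_eq_or_eq (g := s(u, t)) (mem_edgeFinset.2 hua)
      (mem_edgeFinset.2 huz) (mt Sym2.congr_right.1 haz) (fun f hf hfa hmeet => ?_)
      (fun f hf hfz hmeet => ?_)
    · obtain ⟨y, hy, rfl⟩ := exists_eq_of_edgesMeet_of_leaf ha (mem_edgeFinset.1 hf) hfa hmeet
      rcases hu y hy with rfl | rfl | rfl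
      exacts [absurd rfl hfa, .inl rfl, .inr rfl]
    · obtain ⟨y, hy, rfl⟩ := exists_eq_of_edgesMeet_of_leaf hz (mem_edgeFinset.1 hf) hfz hmeet
      rcases hu y hy with rfl | rfl | rfl
      exacts [.inl rfl, absurd rfl hfz, .inr rfl]
  evenComponents_deleteEdges heven := by
    refine heven.deleteEdges_pair (B := {a, z}) (x := u) hua huz (mt Sym2.congr_right.1 haz)
      ⟨u, Sym2.mem_mk_left _ _, Sym2.mem_mk_left _ _⟩ ?_ ?_ ?_
    · rintro e (rfl | rfl)
      exacts [⟨a, .inl rfl, Sym2.mem_mk_right _ _⟩, ⟨z, .inr rfl, Sym2.mem_mk_right _ _⟩]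
    · rintro b (rfl | rfl) y hy
      · rw [ha y hy]
        exact .inl Sym2.eq_swap
      · rw [hz y hy]
        exact .inr Sym2.eq_swap
    · rintro b (rfl | rfl) y - hy
      exacts [ha y hy, hz y hy]

theorem isRemovablePair_of_pendant [Finite V] (hua : G.Adj u a) (hut : G.Adj u t) (hta : t ≠ a)
    (ha : ∀ y, G.Adj a y → y = u) (hu : ∀ y, G.Adj u y → y = a ∨ y = t) :
    IsRemovablePair G s(u, a) s(u, t) where
  mem₁ := hua
  mem₂ := hut
  ne := mt Sym2.congr_right.1 hta.symm
  edgesMeet := ⟨u, Sym2.mem_mk_left _ _, Sym2.mem_mk_left _ _⟩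
  forced M hM := hM.pair_mem_of_edgesMeet_eq (mem_edgeFinset.2 hua) fun f hf hfa hmeet => by
    obtain ⟨y, hy, rfl⟩ := exists_eq_of_edgesMeet_of_leaf ha (mem_edgeFinset.1 hf) hfa hmeet
    rcases hu y hy with rfl | rfl
    exacts [absurd rfl hfa, rfl]
  evenComponents_deleteEdges heven := by
    refine heven.deleteEdges_pair (B := {a, u}) (x := t) hua hut (mt Sym2.congr_right.1 hta.symm)
      ⟨u, Sym2.mem_mk_left _ _, Sym2.mem_mk_left _ _⟩ ?_ ?_ ?_
    · rintro e (rfl | rfl)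
      exacts [⟨a, .inl rfl, Sym2.mem_mk_right _ _⟩, ⟨u, .inr rfl, Sym2.mem_mk_left _ _⟩]
    · rintro b (rfl | rfl) y hy
      · rw [ha y hy]
        exact .inl Sym2.eq_swap
      · rcases hu y hy with rfl | rfl
        exacts [.inl rfl, .inr rfl]
    · rintro b (rfl | rfl) y hyB hy
      · exact absurd (.inr (ha y hy)) hyB
      · exact (hu y hy).resolve_left fun hya => hyB (.inl hya)

theorem exists_isRemovablePair [Fintype V] [DecidableRel G.Adj] (hG : G.IsAcyclic)
    (hdeg : ∀ v, G.degree v ≤ 3) (heven : EvenComponents G) {e : Sym2 V} (he : e ∈ G.edgeSet) :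
    ∃ e₁ e₂, IsRemovablePair G e₁ e₂ := by
  obtain ⟨u, a, hua, ha, hu | ⟨t, hut, hta, hleaf⟩⟩ := hG.exists_leaf he
  · exact absurd heven (not_evenComponents_of_adj_of_leaf hua hu ha)
  by_cases hz : ∃ z, G.Adj u z ∧ z ≠ a ∧ z ≠ t
  · obtain ⟨z, huz, hza, hzt⟩ := hz
    have hN : ∀ y, G.Adj u y → y = a ∨ y = z ∨ y = t := fun y hy => by
      simpa using mem_of_subset_neighborFinset (s := {a, z, t})
        (by simp [Finset.insert_subset_iff, hua, huz, hut])
        ((hdeg u).trans (Finset.card_eq_three.2 ⟨a, z, t, hza.symm, hta.symm, hzt, rfl⟩).ge) hy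
    exact ⟨_, _, isRemovablePair_of_cherry hua huz hza.symm (hleaf a hua hta.symm)
      (hleaf z huz hzt) hN⟩
  · push Not at hz
    exact ⟨_, _, isRemovablePair_of_pendant hua hut hta ha
      fun y hy => or_iff_not_imp_left.2 (hz y hy)⟩

end Reduction

end Development

theorem stmt3_general {V : Type*} [Fintype V] [DecidableEq V]
    (G : SimpleGraph V) [DecidableRel G.Adj]
    (hforest : G.IsAcyclic)
    (hdeg : ∀ v : V, G.degree v ≤ 3)
    (heven : ∀ c : G.ConnectedComponent,
      Even ({e ∈ G.edgeSet | ∀ v ∈ e, G.connectedComponentMk v = c}.ncard)) :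
    ∃! M : Finset (Finset (Sym2 V)),
      (∀ p ∈ M, ∃ e f, e ∈ G.edgeFinset ∧ f ∈ G.edgeFinset ∧ e ≠ f ∧
          p = {e, f} ∧ ∃ v : V, v ∈ e ∧ v ∈ f)
      ∧ (∀ e ∈ G.edgeFinset, ∃! p, p ∈ M ∧ e ∈ p) := by
  induction hn : G.edgeFinset.card using Nat.strong_induction_on generalizing G with
  | _ n ih =>
  obtain hE | ⟨e, he⟩ := G.edgeFinset.eq_empty_or_nonempty
  · rw [hE]
    exact existsUnique_isAdjPairing_empty
  obtain ⟨e₁, e₂, h⟩ := exists_isRemovablePair hforest hdeg heven (mem_edgeFinset.1 he)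
  classical
  subst hn
  exact h.existsUnique_isAdjPairing (ih _ h.card_edgeFinset_deleteEdges_lt _
    (hforest.anti (G.deleteEdges_le _)) (fun v => (degree_le_of_le (G.deleteEdges_le _)).trans
    (hdeg v)) (h.evenComponents_deleteEdges heven) rfl)

/-- An at most trivalent finite forest with `2N` edges, each of whose connected
components has an even number of edges, admits a unique perfect matching of its
edges into pairs of adjacent edges (edges sharing a vertex). -/
theorem stmt3 {V : Type*} [Fintype V] [DecidableEq V] (N : ℕ)
    (G : SimpleGraph V) [DecidableRel G.Adj]
    (hforest : G.IsAcyclic)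
    (hdeg : ∀ v : V, G.degree v ≤ 3)
    (hcard : G.edgeFinset.card = 2 * N)
    (heven : ∀ c : G.ConnectedComponent,
      Even ({e ∈ G.edgeSet | ∀ v ∈ e, G.connectedComponentMk v = c}.ncard)) :
    ∃! M : Finset (Finset (Sym2 V)),
      (∀ p ∈ M, ∃ e f, e ∈ G.edgeFinset ∧ f ∈ G.edgeFinset ∧ e ≠ f ∧
          p = {e, f} ∧ ∃ v : V, v ∈ e ∧ v ∈ f)
      ∧ (∀ e ∈ G.edgeFinset, ∃! p, p ∈ M ∧ e ∈ p) :=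
  stmt3_general G hforest hdeg heven
end

section
/- Let f be a non-degenerate counterclockwise-oriented triangle in the complex plane with interior angles α1, α2, α3 ∈ (0, π) and circumradius R > 0. Define the 3×3 complex matrix D(f) with entries D(f) = (1/(8R²)) · [[cot α2 + cot α3, −cot α3 − i, −cot α2 + i], [−cot α3 + i, cot α3 + cot α1, −cot α1 − i], [−cot α2 − i, −cot α1 + i, cot α1 + cot α2]]. Then D(f) is a positive semidefinite Hermitian matrix with rank 1, i.e., it has eigenvalue 0 with multiplicity 2 and one positive eigenvalue λ = (1/(4R²))(cot α1 + cot α2 + cot α3). -/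
/-!
Write `a, b, c` for `cot α1, cot α2, cot α3`. The angle sum gives `ab + bc + ca = 1`, so that
for instance `c² + 1 = (c + a)(c + b)`, and with this identity `8R² D(f)` factors as
`(b + c)⁻¹ v v*` for its first column `v = (b + c, -c + i, -b - i)`. Since `b + c > 0`, `D(f)` is
positive semidefinite of rank one, and `‖v‖² = 2(b + c)(a + b + c)` gives the eigenvalue.
-/

open Real
open scoped ComplexOrder

/-- The 3×3 Kähler matrix `D(f)` of a triangle with angles `α1, α2, α3` and
circumradius `R`. -/
noncomputable def Dmat (α1 α2 α3 R : ℝ) : Matrix (Fin 3) (Fin 3) ℂ :=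
  (1 / (8 * (R : ℂ) ^ 2)) •
    !![(Real.cot α2 : ℂ) + (Real.cot α3 : ℂ),
        -(Real.cot α3 : ℂ) - Complex.I, -(Real.cot α2 : ℂ) + Complex.I;
      -(Real.cot α3 : ℂ) + Complex.I,
        (Real.cot α3 : ℂ) + (Real.cot α1 : ℂ), -(Real.cot α1 : ℂ) - Complex.I;
      -(Real.cot α2 : ℂ) - Complex.I, -(Real.cot α1 : ℂ) + Complex.I,
        (Real.cot α1 : ℂ) + (Real.cot α2 : ℂ)]

open Matrix

theorem Matrix.rank_vecMulVec_of_ne_zero {m n K : Type*} [Fintype m] [Fintype n] [DecidableEq n]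
    [Field K] {w : m → K} {v : n → K} (hw : w ≠ 0) (hv : v ≠ 0) : (vecMulVec w v).rank = 1 := by
  refine le_antisymm (rank_vecMulVec_le w v) (Nat.one_le_iff_ne_zero.mpr fun h => ?_)
  rw [rank, Submodule.finrank_eq_zero, LinearMap.range_eq_bot, ← toLin'_apply',
    LinearEquiv.map_eq_zero_iff] at h
  obtain ⟨i, hi⟩ := Function.ne_iff.mp hw
  obtain ⟨j, hj⟩ := Function.ne_iff.mp hv
  exact mul_ne_zero hi hj congr($h i j)

theorem Real.cot_mul_cot_add_cot_mul_cot_add_cot_mul_cot {α β γ : ℝ} (hα : sin α ≠ 0)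
    (hβ : sin β ≠ 0) (hγ : sin γ ≠ 0) (hsum : α + β + γ = π) :
    cot α * cot β + cot β * cot γ + cot γ * cot α = 1 := by
  have hsinγ : sin γ = sin α * cos β + cos α * sin β := by
    rw [show γ = π - (α + β) by linarith, sin_pi_sub, sin_add]
  have hcosγ : cos γ = sin α * sin β - cos α * cos β := by
    rw [show γ = π - (α + β) by linarith, cos_pi_sub, cos_add]; ring
  simp only [cot_eq_cos_div_sin]
  field_simp
  rw [hcosγ, hsinγ]
  ring

theorem Real.cot_add_cot_pos {β γ : ℝ} (hβ : 0 < β) (hγ : 0 < γ) (hβγ : β + γ < π) :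
    0 < cot β + cot γ := by
  have hsβ : 0 < sin β := sin_pos_of_pos_of_lt_pi hβ (by linarith)
  have hsγ : 0 < sin γ := sin_pos_of_pos_of_lt_pi hγ (by linarith)
  have hsβγ : 0 < sin (β + γ) := sin_pos_of_pos_of_lt_pi (by linarith) hβγ
  rw [sin_add] at hsβγ
  rw [cot_eq_cos_div_sin, cot_eq_cos_div_sin, div_add_div _ _ hsβ.ne' hsγ.ne']
  exact div_pos (by linarith) (mul_pos hsβ hsγ)

theorem add_add_pos_of_mul_add_mul_add_mul_eq_one {a b c : ℝ} (h : a * b + b * c + c * a = 1)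
    (hbc : 0 < b + c) : 0 < a + b + c := by
  have hprod : (a + b + c) * (b + c) = 1 + b ^ 2 + b * c + c ^ 2 := by linear_combination h
  nlinarith [sq_nonneg (b + c), sq_nonneg b, sq_nonneg c]

noncomputable def Dvec (b c : ℝ) : Fin 3 → ℂ := ![b + c, -c + Complex.I, -b - Complex.I]

theorem Dvec_ne_zero (b c : ℝ) : Dvec b c ≠ 0 := fun h => by
  simpa [Dvec, Complex.ext_iff] using congrFun h 2

theorem star_Dvec_dotProduct_Dvec (b c : ℝ) :
    star (Dvec b c) ⬝ᵥ Dvec b c = ((b + c) ^ 2 + b ^ 2 + c ^ 2 + 2 : ℝ) := by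
  simp only [dotProduct, Dvec, Pi.star_apply, RCLike.star_def, Fin.sum_univ_three, Fin.isValue,
    cons_val_zero, cons_val_one, cons_val, map_add, map_neg, map_sub, Complex.conj_ofReal,
    Complex.conj_I, sub_neg_eq_add]
  push_cast
  linear_combination (-2 : ℂ) * Complex.I_sq

theorem Dmat_eq_smul_vecMulVec {α1 α2 α3 R : ℝ}
    (hK : cot α1 * cot α2 + cot α2 * cot α3 + cot α3 * cot α1 = 1)
    (hbc : cot α2 + cot α3 ≠ 0) :
    Dmat α1 α2 α3 R = (((8 * R ^ 2 * (cot α2 + cot α3))⁻¹ : ℝ) : ℂ) •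
      vecMulVec (Dvec (cot α2) (cot α3)) (star (Dvec (cot α2) (cot α3))) := by
  unfold Dmat
  generalize cot α1 = a at hK ⊢
  generalize cot α2 = b at hK hbc ⊢
  generalize cot α3 = c at hK hbc ⊢
  have hK' : (a * b + b * c + c * a : ℂ) = 1 := by exact_mod_cast hK
  have hbc' : (b + c : ℂ) ≠ 0 := by exact_mod_cast hbc
  rw [mul_inv, Complex.ofReal_mul, ← smul_smul, one_div]
  push_cast
  congr 1
  ext i j
  simp only [Matrix.smul_apply, vecMulVec_apply, Pi.star_apply, smul_eq_mul]
  fin_cases i <;> fin_cases j <;>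
    simp only [Fin.zero_eta, Fin.isValue, Fin.mk_one, Fin.reduceFinMk, of_apply, cons_val',
      cons_val, cons_val_zero, cons_val_one, cons_val_fin_one, Dvec, star_add, star_sub, star_neg,
      RCLike.star_def, Complex.conj_ofReal, Complex.conj_I, sub_neg_eq_add] <;>
    field_simp <;>
    first
      | ring1
      | linear_combination hK' + Complex.I_sq
      | linear_combination -hK' - Complex.I_sq

theorem Dmat_mulVec_Dvec {α1 α2 α3 R : ℝ}
    (hK : cot α1 * cot α2 + cot α2 * cot α3 + cot α3 * cot α1 = 1)
    (hbc : cot α2 + cot α3 ≠ 0) (hR : R ≠ 0) :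
    Dmat α1 α2 α3 R *ᵥ Dvec (cot α2) (cot α3) =
      (((1 / (4 * R ^ 2)) * (cot α1 + cot α2 + cot α3) : ℝ) : ℂ) • Dvec (cot α2) (cot α3) := by
  rw [Dmat_eq_smul_vecMulVec hK hbc, smul_mulVec, vecMulVec_mulVec,
    star_Dvec_dotProduct_Dvec, op_smul_eq_smul, smul_smul, ← Complex.ofReal_mul]
  congr 2
  field_simp
  linear_combination (-8) * hK

/-- For a non-degenerate counterclockwise triangle with angles `α1, α2, α3 ∈ (0,π)`
and circumradius `R > 0`, the Kähler matrix `D(f)` is positive semidefinite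
Hermitian of rank 1, with positive eigenvalue `(cot α1 + cot α2 + cot α3)/(4R²)`. -/
theorem stmt6 (α1 α2 α3 R : ℝ)
    (h1 : α1 ∈ Set.Ioo 0 π) (h2 : α2 ∈ Set.Ioo 0 π) (h3 : α3 ∈ Set.Ioo 0 π)
    (hsum : α1 + α2 + α3 = π) (hR : 0 < R) :
    (Dmat α1 α2 α3 R).IsHermitian ∧ (Dmat α1 α2 α3 R).PosSemidef ∧
    (Dmat α1 α2 α3 R).rank = 1 ∧
    (0 : ℝ) < (1 / (4 * R ^ 2)) * (Real.cot α1 + Real.cot α2 + Real.cot α3) ∧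
    ∃ v : Fin 3 → ℂ, v ≠ 0 ∧
      (Dmat α1 α2 α3 R).mulVec v =
        (((1 / (4 * R ^ 2)) * (Real.cot α1 + Real.cot α2 + Real.cot α3) : ℝ) : ℂ) • v := by
  have hK := cot_mul_cot_add_cot_mul_cot_add_cot_mul_cot (sin_pos_of_mem_Ioo h1).ne'
    (sin_pos_of_mem_Ioo h2).ne' (sin_pos_of_mem_Ioo h3).ne' hsum
  have hbc : 0 < cot α2 + cot α3 := cot_add_cot_pos h2.1 h3.1 (by linarith [h1.1])
  have hk : 0 < (8 * R ^ 2 * (cot α2 + cot α3))⁻¹ := by positivity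
  have hD := Dmat_eq_smul_vecMulVec (R := R) hK hbc.ne'
  have hPSD : (Dmat α1 α2 α3 R).PosSemidef :=
    hD ▸ (posSemidef_vecMulVec_self_star _).smul (Complex.zero_le_real.mpr hk.le)
  refine ⟨hPSD.isHermitian, hPSD, ?_, ?_, _, Dvec_ne_zero _ _, Dmat_mulVec_Dvec hK hbc.ne' hR.ne'⟩
  · rw [hD, rank_smul_of_mem_nonZeroDivisors _
      (mem_nonZeroDivisors_of_ne_zero (Complex.ofReal_ne_zero.mpr hk.ne')),
      rank_vecMulVec_of_ne_zero (Dvec_ne_zero _ _) (star_ne_zero.mpr (Dvec_ne_zero _ _))]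
  · exact mul_pos (by positivity) (add_add_pos_of_mul_add_mul_add_mul_eq_one hK hbc)
end

section
/- Let f be a non-degenerate triangle with vertices z1, z2, z3 ∈ ℂ, angles α1, α2, α3, circumradius R, and let D(f) be the 3×3 matrix with diagonal entries D_{kk} = (cot α_j + cot α_l)/(8R²) (where {j,l} = {1,2,3}\{k}) and off-diagonal entries as in the Kähler form of the triangle. Then the vectors (1,1,1) and (z̄1, z̄2, z̄3) are right null-vectors of D(f): D(f)·(1,1,1)ᵀ = 0 and D(f)·(z̄1, z̄2, z̄3)ᵀ = 0. -/
open Real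

lemma exp_I_mul_mul_I_sub_cot {θ : ℝ} (h : sin θ ≠ 0) :
    Complex.exp (Complex.I * θ) * (Complex.I - (cot θ : ℂ)) = -1 / (sin θ : ℂ) := by
  have hs : Complex.sin θ ≠ 0 := by exact_mod_cast h
  rw [mul_comm Complex.I, Complex.exp_mul_I, Complex.ofReal_cot, Complex.cot_eq_cos_div_sin,
    Complex.ofReal_sin]
  field_simp
  linear_combination -Complex.sin_sq_add_cos_sq (θ : ℂ) + Complex.sin θ ^ 2 * Complex.I_sq

lemma cot_add_cot {β γ : ℝ} (hβ : sin β ≠ 0) (hγ : sin γ ≠ 0) :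
    cot β + cot γ = sin (β + γ) / (sin β * sin γ) := by
  rw [cot_eq_cos_div_sin, cot_eq_cos_div_sin, sin_add]
  field_simp
  ring

/-- Substituting `r - p` into the row and using `e^{iα} (i - cot α) = -1 / sin α`, the row collapses
to `(q - p) (cot γ + cot α - sin β / (sin γ sin α))`, which vanishes since `sin (γ + α) = sin β`. -/
lemma triangle_row_eq_zero {α β γ : ℝ} (hα : sin α ≠ 0) (hγ : sin γ ≠ 0) (hsum : α + β + γ = π)
    {p q r : ℂ} (h : r - p = (q - p) * ((sin β / sin γ : ℝ) : ℂ) * Complex.exp (Complex.I * α)) :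
    (-(cot γ : ℂ) - Complex.I) * p + ((cot γ : ℂ) + (cot α : ℂ)) * q
      + (-(cot α : ℂ) + Complex.I) * r = 0 := by
  have hcot : (cot γ : ℂ) + (cot α : ℂ) = (sin β : ℂ) / ((sin γ : ℂ) * (sin α : ℂ)) := by
    have : cot γ + cot α = sin β / (sin γ * sin α) := by
      rw [cot_add_cot hγ hα, show γ + α = π - β by linarith, sin_pi_sub]
    exact_mod_cast this
  rw [Complex.ofReal_div] at h
  linear_combination (Complex.I - (cot α : ℂ)) * h
    + (q - p) * ((sin β : ℂ) / (sin γ : ℂ)) * exp_I_mul_mul_I_sub_cot hα + (q - p) * hcot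

lemma conj_triangle_row_eq_zero {α β γ : ℝ} (hα : sin α ≠ 0) (hγ : sin γ ≠ 0)
    (hsum : α + β + γ = π) {p q r : ℂ}
    (h : r - p = (q - p) * ((sin β / sin γ : ℝ) : ℂ) * Complex.exp (Complex.I * α)) :
    (-(cot γ : ℂ) + Complex.I) * (starRingEnd ℂ) p
      + ((cot γ : ℂ) + (cot α : ℂ)) * (starRingEnd ℂ) q
      + (-(cot α : ℂ) - Complex.I) * (starRingEnd ℂ) r = 0 := by
  have h' := congrArg (starRingEnd ℂ) (triangle_row_eq_zero hα hγ hsum h)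
  simp only [map_add, map_mul, map_neg, map_sub, Complex.conj_I, Complex.conj_ofReal,
    map_zero] at h'
  linear_combination h'

theorem stmt7_general (α1 α2 α3 R : ℝ) (z1 z2 z3 : ℂ)
    (h1 : α1 ∈ Set.Ioo 0 π) (h2 : α2 ∈ Set.Ioo 0 π) (h3 : α3 ∈ Set.Ioo 0 π)
    (hsum : α1 + α2 + α3 = π)
    (hz1 : z3 - z1 = (z2 - z1) * ((Real.sin α2 / Real.sin α3 : ℝ) : ℂ) *
      Complex.exp (Complex.I * (α1 : ℂ)))
    (hz2 : z1 - z2 = (z3 - z2) * ((Real.sin α3 / Real.sin α1 : ℝ) : ℂ) *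
      Complex.exp (Complex.I * (α2 : ℂ)))
    (hz3 : z2 - z3 = (z1 - z3) * ((Real.sin α1 / Real.sin α2 : ℝ) : ℂ) *
      Complex.exp (Complex.I * (α3 : ℂ))) :
    (Dmat α1 α2 α3 R).mulVec ![1, 1, 1] = 0 ∧
    (Dmat α1 α2 α3 R).mulVec
      ![(starRingEnd ℂ) z1, (starRingEnd ℂ) z2, (starRingEnd ℂ) z3] = 0 := by
  have hs : ∀ α ∈ Set.Ioo 0 π, sin α ≠ 0 := fun α hα => (sin_pos_of_pos_of_lt_pi hα.1 hα.2).ne'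
  have row1 := conj_triangle_row_eq_zero (hs _ h3) (hs _ h2) (by linarith) hz3
  have row2 := conj_triangle_row_eq_zero (hs _ h1) (hs _ h3) hsum hz1
  have row3 := conj_triangle_row_eq_zero (hs _ h2) (hs _ h1) (by linarith) hz2
  constructor
  · ext i
    fin_cases i <;> simp [Dmat, Matrix.mulVec, dotProduct, Fin.sum_univ_three] <;> ring
  · ext i
    fin_cases i <;> simp [Dmat, Matrix.mulVec, dotProduct, Fin.sum_univ_three, -Complex.ofReal_cot]
    · linear_combination (1 / (8 * (R : ℂ) ^ 2)) * row1
    · linear_combination (1 / (8 * (R : ℂ) ^ 2)) * row2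
    · linear_combination (1 / (8 * (R : ℂ) ^ 2)) * row3

/-- For a non-degenerate counterclockwise triangle `(z1,z2,z3)` with angle `αk`
at vertex `zk` and circumradius `R`, the vectors `(1,1,1)` and `(z̄1,z̄2,z̄3)`
are right null-vectors of the Kähler matrix `D(f)`. -/
theorem stmt7 (α1 α2 α3 R : ℝ) (z1 z2 z3 : ℂ)
    (h1 : α1 ∈ Set.Ioo 0 π) (h2 : α2 ∈ Set.Ioo 0 π) (h3 : α3 ∈ Set.Ioo 0 π)
    (hsum : α1 + α2 + α3 = π) (hR : 0 < R)
    (hz1 : z3 - z1 = (z2 - z1) * ((Real.sin α2 / Real.sin α3 : ℝ) : ℂ) *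
      Complex.exp (Complex.I * (α1 : ℂ)))
    (hz2 : z1 - z2 = (z3 - z2) * ((Real.sin α3 / Real.sin α1 : ℝ) : ℂ) *
      Complex.exp (Complex.I * (α2 : ℂ)))
    (hz3 : z2 - z3 = (z1 - z3) * ((Real.sin α1 / Real.sin α2 : ℝ) : ℂ) *
      Complex.exp (Complex.I * (α3 : ℂ)))
    (hl : ‖z2 - z1‖ = 2 * R * Real.sin α3) :
    (Dmat α1 α2 α3 R).mulVec ![1, 1, 1] = 0 ∧
    (Dmat α1 α2 α3 R).mulVec
      ![(starRingEnd ℂ) z1, (starRingEnd ℂ) z2, (starRingEnd ℂ) z3] = 0 :=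
  stmt7_general α1 α2 α3 R z1 z2 z3 h1 h2 h3 hsum hz1 hz2 hz3
end

section
/- Let f = (v1, v2, v3) be a non-degenerate counterclockwise-oriented triangle in ℂ with vertices z1, z2, z3, circumradius R, and area A. For complex functions Φ, Ψ on the vertices, define ∇Φ(f) = (1/(4i))·(Φ(v1)(z̄3−z̄2) + Φ(v2)(z̄1−z̄3) + Φ(v3)(z̄2−z̄1))/A and ∇̄Ψ(f) = −(1/(4i))·(Ψ(v1)(z3−z2) + Ψ(v2)(z1−z3) + Ψ(v3)(z2−z1))/A. Then ∑_{i,j} Φ(v_i) D(f)_{ij} Ψ̄(v_j) = (A/R²)·∇̄Φ(f)·∇Ψ̄(f), where D(f) is the Kähler matrix of the triangle. -/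
/-!
Let `e = (z3 - z2, z1 - z3, z2 - z1)` be the edges opposite the vertices. At `z1`,
`(z2 - z1) * conj (z3 - z1) = |z2 - z1| |z3 - z1| e^{-iα1}`; its imaginary part is `-2A` by the
area formula, so its real part is `2A cot α1`; cyclically the same holds at `z2` and `z3`.
These give the off-diagonal entries of `D(f)` as `e_i conj e_j / (16 R² A)`, and
`e1 + e2 + e3 = 0` gives the diagonal ones. So `D(f)` is the rank-one matrix `e e* / (16 R² A)`
and its quadratic form factors into the two discrete gradients.
-/

open Real

open Complex ComplexConjugate

theorem mul_conj_eq_of_eq_mul_exp {a b : ℂ} {r α A : ℝ} (hα : Real.sin α ≠ 0)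
    (hb : b = a * r * exp (I * α)) (hA : (b * conj a - a * conj b) / (4 * I) = A) :
    a * conj b = 2 * A * (Real.cot α - I) := by
  have hexp : exp (I * α) = Real.cos α + Real.sin α * I := by
    rw [mul_comm, exp_mul_I, ofReal_cos, ofReal_sin]
  rw [hb, hexp] at hA ⊢
  simp only [map_mul, map_add, conj_ofReal, conj_I] at hA ⊢
  have hα' : (Real.sin α : ℂ) ≠ 0 := ofReal_ne_zero.mpr hα
  have harea : a * conj a * r * Real.sin α = 2 * A := by
    rw [div_eq_iff (by simp)] at hA
    linear_combination (-I / 2) * hA + (a * conj a * r * Real.sin α - 2 * A) * I_sq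
  rw [Real.cot_eq_cos_div_sin, ofReal_div, ← harea]
  field_simp
  ring

noncomputable def signedArea (z1 z2 z3 : ℂ) : ℂ :=
  ((z3 - z1) * (conj z2 - conj z1) - (z2 - z1) * (conj z3 - conj z1)) / (4 * I)

theorem signedArea_rotate (z1 z2 z3 : ℂ) : signedArea z2 z3 z1 = signedArea z1 z2 z3 := by
  unfold signedArea; ring

theorem sub_mul_conj_sub_eq_cot {z1 z2 z3 : ℂ} {r α A : ℝ} (hα : Real.sin α ≠ 0)
    (hz : z3 - z1 = (z2 - z1) * r * exp (I * α)) (hA : signedArea z1 z2 z3 = A) :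
    (z2 - z1) * (conj z3 - conj z1) = 2 * A * (Real.cot α - I) := by
  rw [← map_sub]
  refine mul_conj_eq_of_eq_mul_exp hα hz ?_
  rw [← hA, signedArea, map_sub, map_sub]

theorem Dmat_apply {α1 α2 α3 R A : ℝ} {z1 z2 z3 : ℂ} (hA : A ≠ 0)
    (h1 : (z2 - z1) * (conj z3 - conj z1) = 2 * A * (Real.cot α1 - I))
    (h2 : (z3 - z2) * (conj z1 - conj z2) = 2 * A * (Real.cot α2 - I))
    (h3 : (z1 - z3) * (conj z2 - conj z3) = 2 * A * (Real.cot α3 - I)) (i j : Fin 3) :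
    Dmat α1 α2 α3 R i j = 1 / (8 * R ^ 2) *
      (![z3 - z2, z1 - z3, z2 - z1] i * conj (![z3 - z2, z1 - z3, z2 - z1] j) / (2 * A)) := by
  have h1' := congrArg conj h1
  have h2' := congrArg conj h2
  have h3' := congrArg conj h3
  simp only [map_mul, map_sub, map_ofNat, conj_ofReal, conj_I, conj_conj] at h1' h2' h3'
  have hA' : (2 * A : ℂ) ≠ 0 := by simpa using hA
  simp only [Dmat, Matrix.smul_apply, smul_eq_mul]
  congr 1
  rw [eq_div_iff hA']
  fin_cases i <;> fin_cases j <;>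
    simp only [Matrix.of_apply, Matrix.cons_val', Matrix.cons_val_zero, Matrix.cons_val_one,
      Matrix.head_cons, Matrix.empty_val', Matrix.cons_val_fin_one, Matrix.head_fin_const,
      Matrix.cons_val_two, Matrix.tail_cons, Fin.zero_eta, Fin.mk_one, Fin.reduceFinMk, map_sub]
  · linear_combination -h2 - h3'
  · linear_combination h3'
  · linear_combination h2
  · linear_combination h3
  · linear_combination -h3 - h1'
  · linear_combination h1'
  · linear_combination h2'
  · linear_combination h1
  · linear_combination -h1 - h2'

theorem area_div_sq_mul_gradient_mul_gradient {A : ℝ} (R : ℝ) (P Q : ℂ) (hA : A ≠ 0) :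
    ((A / R ^ 2 : ℝ) : ℂ) * (-(1 / (4 * I)) * P / A) * ((1 / (4 * I)) * Q / A)
      = P * Q / (16 * R ^ 2 * A) := by
  have hA' : (A : ℂ) ≠ 0 := ofReal_ne_zero.mpr hA
  have hI : -(1 / (4 * I)) * (1 / (4 * I)) = (1 / 16 : ℂ) := by
    field_simp
    linear_combination -16 * I_sq
  calc ((A / R ^ 2 : ℝ) : ℂ) * (-(1 / (4 * I)) * P / A) * ((1 / (4 * I)) * Q / A)
      = A / R ^ 2 * (-(1 / (4 * I)) * (1 / (4 * I))) * P * Q / A / A := by push_cast; ring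
    _ = P * Q / (16 * R ^ 2 * A) := by rw [hI]; field_simp

theorem stmt9_general (α1 α2 α3 R A : ℝ) (z1 z2 z3 : ℂ) (Φ Ψ : Fin 3 → ℂ)
    (h1 : α1 ∈ Set.Ioo 0 π) (h2 : α2 ∈ Set.Ioo 0 π) (h3 : α3 ∈ Set.Ioo 0 π)
    (hA : 0 < A)
    (harea : ((z3 - z1) * ((starRingEnd ℂ) z2 - (starRingEnd ℂ) z1)
        - (z2 - z1) * ((starRingEnd ℂ) z3 - (starRingEnd ℂ) z1)) /
          (4 * Complex.I) = (A : ℂ))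
    (hz1 : z3 - z1 = (z2 - z1) * ((Real.sin α2 / Real.sin α3 : ℝ) : ℂ) *
      Complex.exp (Complex.I * (α1 : ℂ)))
    (hz2 : z1 - z2 = (z3 - z2) * ((Real.sin α3 / Real.sin α1 : ℝ) : ℂ) *
      Complex.exp (Complex.I * (α2 : ℂ)))
    (hz3 : z2 - z3 = (z1 - z3) * ((Real.sin α1 / Real.sin α2 : ℝ) : ℂ) *
      Complex.exp (Complex.I * (α3 : ℂ))) :
    ∑ i : Fin 3, ∑ j : Fin 3, Φ i * Dmat α1 α2 α3 R i j * (starRingEnd ℂ) (Ψ j)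
      = ((A / R ^ 2 : ℝ) : ℂ) *
        (-(1 / (4 * Complex.I)) *
          (Φ 0 * (z3 - z2) + Φ 1 * (z1 - z3) + Φ 2 * (z2 - z1)) / (A : ℂ)) *
        ((1 / (4 * Complex.I)) *
          ((starRingEnd ℂ) (Ψ 0) * ((starRingEnd ℂ) z3 - (starRingEnd ℂ) z2)
            + (starRingEnd ℂ) (Ψ 1) * ((starRingEnd ℂ) z1 - (starRingEnd ℂ) z3)
            + (starRingEnd ℂ) (Ψ 2) * ((starRingEnd ℂ) z2 - (starRingEnd ℂ) z1))
          / (A : ℂ)) := by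
  have hsin {α : ℝ} (hα : α ∈ Set.Ioo 0 π) : Real.sin α ≠ 0 :=
    (sin_pos_of_pos_of_lt_pi hα.1 hα.2).ne'
  have harea₁ : signedArea z1 z2 z3 = A := harea
  have harea₂ : signedArea z2 z3 z1 = A := (signedArea_rotate z1 z2 z3).trans harea₁
  have harea₃ : signedArea z3 z1 z2 = A := (signedArea_rotate z2 z3 z1).trans harea₂
  have hD := Dmat_apply (R := R) hA.ne'
    (sub_mul_conj_sub_eq_cot (hsin h1) hz1 harea₁)
    (sub_mul_conj_sub_eq_cot (hsin h2) hz2 harea₂)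
    (sub_mul_conj_sub_eq_cot (hsin h3) hz3 harea₃)
  rw [area_div_sq_mul_gradient_mul_gradient R _ _ hA.ne']
  simp only [hD, Fin.sum_univ_three, Matrix.cons_val_zero, Matrix.cons_val_one,
    Matrix.cons_val_two, Matrix.head_cons, Matrix.tail_cons, map_sub]
  ring

/-- For a non-degenerate counterclockwise triangle with vertices `z1, z2, z3`,
angles `αk` at `zk`, circumradius `R` and area `A`, and complex functions `Φ, Ψ`
on the vertices, `∑_{i,j} Φ_i D(f)_{ij} Ψ̄_j = (A/R²)·∇̄Φ(f)·∇Ψ̄(f)`, where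
`∇Φ(f) = (1/4i)(Φ₁(z̄3−z̄2)+Φ₂(z̄1−z̄3)+Φ₃(z̄2−z̄1))/A` and
`∇̄Φ(f) = −(1/4i)(Φ₁(z3−z2)+Φ₂(z1−z3)+Φ₃(z2−z1))/A`. -/
theorem stmt9 (α1 α2 α3 R A : ℝ) (z1 z2 z3 : ℂ) (Φ Ψ : Fin 3 → ℂ)
    (h1 : α1 ∈ Set.Ioo 0 π) (h2 : α2 ∈ Set.Ioo 0 π) (h3 : α3 ∈ Set.Ioo 0 π)
    (hsum : α1 + α2 + α3 = π) (hR : 0 < R) (hA : 0 < A)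
    (harea : ((z3 - z1) * ((starRingEnd ℂ) z2 - (starRingEnd ℂ) z1)
        - (z2 - z1) * ((starRingEnd ℂ) z3 - (starRingEnd ℂ) z1)) /
          (4 * Complex.I) = (A : ℂ))
    (hz1 : z3 - z1 = (z2 - z1) * ((Real.sin α2 / Real.sin α3 : ℝ) : ℂ) *
      Complex.exp (Complex.I * (α1 : ℂ)))
    (hz2 : z1 - z2 = (z3 - z2) * ((Real.sin α3 / Real.sin α1 : ℝ) : ℂ) *
      Complex.exp (Complex.I * (α2 : ℂ)))
    (hz3 : z2 - z3 = (z1 - z3) * ((Real.sin α1 / Real.sin α2 : ℝ) : ℂ) *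
      Complex.exp (Complex.I * (α3 : ℂ)))
    (hl : ‖z2 - z1‖ = 2 * R * Real.sin α3) :
    ∑ i : Fin 3, ∑ j : Fin 3, Φ i * Dmat α1 α2 α3 R i j * (starRingEnd ℂ) (Ψ j)
      = ((A / R ^ 2 : ℝ) : ℂ) *
        (-(1 / (4 * Complex.I)) *
          (Φ 0 * (z3 - z2) + Φ 1 * (z1 - z3) + Φ 2 * (z2 - z1)) / (A : ℂ)) *
        ((1 / (4 * Complex.I)) *
          ((starRingEnd ℂ) (Ψ 0) * ((starRingEnd ℂ) z3 - (starRingEnd ℂ) z2)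
            + (starRingEnd ℂ) (Ψ 1) * ((starRingEnd ℂ) z1 - (starRingEnd ℂ) z3)
            + (starRingEnd ℂ) (Ψ 2) * ((starRingEnd ℂ) z2 - (starRingEnd ℂ) z1))
          / (A : ℂ)) :=
  stmt9_general α1 α2 α3 R A z1 z2 z3 Φ Ψ h1 h2 h3 hA harea hz1 hz2 hz3
end

section
/- Let R = (R0 | R̃0) be an (N+3)×(3N+3) matrix partitioned so that R̃0 is an invertible (N+3)×(N+3) block, let E be a (3N+3)×(3N+3) antisymmetric matrix with R·E = 0, let P0 = (Id_{2N}; 0) be the projection onto the first 2N coordinates, E0 = P0ᵀ E P0, and M0 = (Id_{2N}; −R̃0⁻¹R0). Then E = M0 · E0 · M0ᵀ. -/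
/-!
Since `B` is invertible, `(A | B) X = 0` solves for the lower rows of `X` as `-B⁻¹A` times its
upper rows. Applied to `E`, this expresses its lower rows through its upper rows; applied to
`Eᵀ`, which `(A | B)` also kills because `E` is antisymmetric, it expresses the upper rows of `E`
through its upper left block.
-/

open Matrix

namespace Matrix

variable {R l m p : Type*} [CommRing R] [Fintype l] [DecidableEq l] [Fintype m] [DecidableEq m]

theorem eq_fromRows_mul_toRows₁_of_fromCols_mul_eq_zero (A : Matrix l m R) (B : Matrix l l R)
    (hB : IsUnit B.det) (X : Matrix (m ⊕ l) p R) (hX : fromCols A B * X = 0) :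
    X = fromRows 1 (-(B⁻¹ * A)) * X.toRows₁ := by
  have hsplit : A * X.toRows₁ + B * X.toRows₂ = 0 := by
    rwa [← fromRows_toRows X, fromCols_mul_fromRows] at hX
  have hbottom : X.toRows₂ = -(B⁻¹ * A) * X.toRows₁ :=
    calc X.toRows₂ = B⁻¹ * (B * X.toRows₂) := (nonsing_inv_mul_cancel_left _ _ hB).symm
      _ = -(B⁻¹ * A) * X.toRows₁ := by
        rw [eq_neg_of_add_eq_zero_right hsplit, Matrix.mul_neg, Matrix.neg_mul, Matrix.mul_assoc]
  rw [fromRows_mul, Matrix.one_mul, ← hbottom, fromRows_toRows]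

theorem eq_mul_submatrix_mul_transpose_of_fromCols_mul_eq_zero (A : Matrix l m R)
    (B : Matrix l l R) (hB : IsUnit B.det) (F : Matrix (m ⊕ l) (m ⊕ l) R)
    (hF : fromCols A B * F = 0) (hFt : fromCols A B * Fᵀ = 0) :
    F = fromRows 1 (-(B⁻¹ * A)) * F.submatrix Sum.inl Sum.inl
      * (fromRows 1 (-(B⁻¹ * A)))ᵀ := by
  set M := fromRows (1 : Matrix m m R) (-(B⁻¹ * A))
  have hrows : F = M * F.toRows₁ := eq_fromRows_mul_toRows₁_of_fromCols_mul_eq_zero A B hB F hF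
  have hcols : (F.toRows₁)ᵀ = M * Fᵀ.submatrix Sum.inl Sum.inl := by
    refine eq_fromRows_mul_toRows₁_of_fromCols_mul_eq_zero A B hB _ ?_
    ext i j
    simpa [mul_apply] using congr_fun (congr_fun hFt i) (Sum.inl j)
  calc F = M * ((F.toRows₁)ᵀ)ᵀ := by rw [transpose_transpose, ← hrows]
    _ = M * F.submatrix Sum.inl Sum.inl * Mᵀ := by
      rw [hcols, transpose_mul, transpose_submatrix, transpose_transpose, Matrix.mul_assoc]

end Matrix

/-- Let `R = (R0 | R̃0)` be an `(N+3)×(3N+3)` matrix with `R̃0` invertible, and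
`E` an antisymmetric `(3N+3)×(3N+3)` matrix with `R·E = 0`.  With
`E0 = P0ᵀ E P0` (restriction to the first `2N` coordinates) and
`M0 = (Id_{2N}; −R̃0⁻¹R0)`, one has `E = M0·E0·M0ᵀ`. -/
theorem stmt17 (N : ℕ)
    (R0 : Matrix (Fin (N + 3)) (Fin (2 * N)) ℂ)
    (Rt0 : Matrix (Fin (N + 3)) (Fin (N + 3)) ℂ)
    (hRt0 : IsUnit Rt0.det)
    (E : Matrix (Fin (2 * N) ⊕ Fin (N + 3)) (Fin (2 * N) ⊕ Fin (N + 3)) ℂ)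
    (hE : Eᵀ = -E)
    (hRE : Matrix.fromCols R0 Rt0 * E = 0) :
    E = Matrix.fromRows (1 : Matrix (Fin (2 * N)) (Fin (2 * N)) ℂ) (-(Rt0⁻¹ * R0))
          * E.submatrix Sum.inl Sum.inl
          * (Matrix.fromRows (1 : Matrix (Fin (2 * N)) (Fin (2 * N)) ℂ)
              (-(Rt0⁻¹ * R0)))ᵀ :=
  eq_mul_submatrix_mul_transpose_of_fromCols_mul_eq_zero R0 Rt0 hRt0 E hRE
    (by rw [hE, Matrix.mul_neg, hRE, neg_zero])
end

section
/- Let D be an (N+3)×(N+3) positive semidefinite Hermitian matrix over ℂ whose kernel (as right null space) is exactly spanned by the three vectors ψ_a = (z_1^{a−1}, ..., z_{N+3}^{a−1}) for a = 1, 2, 3, where z_1, ..., z_{N+3} are distinct complex numbers. For any choice of three distinct indices a, b, c, let D_{\{a,b,c\}} denote the N×N matrix obtained by deleting rows and columns a, b, c. Then det(D_{\{a,b,c\}}) / |Δ3(z_a, z_b, z_c)|² is independent of the choice of (a, b, c), where Δ3(z_a, z_b, z_c) = (z_a − z_b)(z_a − z_c)(z_b − z_c). -/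
open scoped ComplexOrder

/-- The `N×N` submatrix of `D` obtained by deleting the rows and columns `a, b, c`. -/
def delMat {n : ℕ} (D : Matrix (Fin n) (Fin n) ℂ) (a b c : Fin n) :
    Matrix {i : Fin n // i ≠ a ∧ i ≠ b ∧ i ≠ c} {i : Fin n // i ≠ a ∧ i ≠ b ∧ i ≠ c} ℂ :=
  D.submatrix (fun i => i.1) (fun i => i.1)

/-!
Let `W` be the Vandermonde matrix of `z`. As `D` is Hermitian and kills the columns `1, z, z²`
of `W`, the matrix `Wᴴ D W` vanishes outside its lower-right `N × N` block `H`. Listing the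
points as `a, b, c` followed by the others, a complementary-minor (Jacobi) argument writes
`D_{abc} = Xᴴ H X` with `det W · det X = ± Δ₃(z_a, z_b, z_c)`. Hence
`det D_{abc} / |Δ₃(z_a, z_b, z_c)|² = det H / |det W|²`, which does not depend on `a, b, c`.
-/

open Matrix

namespace Matrix

variable {R : Type*} [CommRing R] {m n : Type*} [Fintype m] [Fintype n]

theorem mul_fromBlocks_nonsing_inv_eq [DecidableEq m] [DecidableEq n]
    {V : Matrix (n ⊕ m) (n ⊕ m) R} (hV : IsUnit V.det) :
    V * fromBlocks 1 V⁻¹.toBlocks₁₂ 0 V⁻¹.toBlocks₂₂ = fromBlocks V.toBlocks₁₁ 0 V.toBlocks₂₁ 1 := by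
  ext i (j | j)
  · rcases i with i | i <;> simp [mul_apply, Fintype.sum_sum_type, one_apply, toBlocks₁₁, toBlocks₂₁]
  · have := congr_fun (congr_fun (mul_nonsing_inv V hV) i) (Sum.inr j)
    rcases i with i | i <;>
      simpa [mul_apply, Fintype.sum_sum_type, one_apply, toBlocks₁₂, toBlocks₂₂] using this

theorem toBlocks₂₂_conjTranspose_mul_fromBlocks_zero_mul [StarRing R]
    (X : Matrix (n ⊕ m) (n ⊕ m) R) (M : Matrix m m R) :
    (Xᴴ * fromBlocks 0 0 0 M * X).toBlocks₂₂ = X.toBlocks₂₂ᴴ * M * X.toBlocks₂₂ := by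
  conv_lhs => rw [← fromBlocks_toBlocks X]
  simp [fromBlocks_conjTranspose, fromBlocks_multiply]

theorem toBlocks₂₂_conjTranspose_mul_mul_fromBlocks_zero_one [DecidableEq m] [StarRing R]
    (A : Matrix (n ⊕ m) (n ⊕ m) R) (P : Matrix n n R) (Q : Matrix m n R) :
    ((fromBlocks P 0 Q 1)ᴴ * A * fromBlocks P 0 Q 1).toBlocks₂₂ = A.toBlocks₂₂ := by
  conv_lhs => rw [← fromBlocks_toBlocks A]
  simp [fromBlocks_conjTranspose, fromBlocks_multiply]

/-- With `X` the right block column of `V⁻¹` completed by `(1; 0)`, `V * X` is `V` with its right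
block column replaced by `(0; 1)`: this gives both `A₂₂ = X₂₂ᴴ (Vᴴ A V)₂₂ X₂₂` and
`det V * det X₂₂ = det V₁₁`. -/
theorem det_toBlocks₂₂_mul_star_det_mul_det [DecidableEq m] [DecidableEq n] [StarRing R]
    {A V : Matrix (n ⊕ m) (n ⊕ m) R} (hA : A.IsHermitian) (hV : IsUnit V.det)
    (hAV : ∀ i k, (A * V) i (Sum.inl k) = 0) :
    A.toBlocks₂₂.det * (star V.det * V.det) =
      (Vᴴ * A * V).toBlocks₂₂.det * (star V.toBlocks₁₁.det * V.toBlocks₁₁.det) := by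
  set X : Matrix (n ⊕ m) (n ⊕ m) R := fromBlocks 1 V⁻¹.toBlocks₁₂ 0 V⁻¹.toBlocks₂₂
  set M := Vᴴ * A * V
  have hM_left (i k) : M i (Sum.inl k) = 0 := by
    simp [M, Matrix.mul_assoc, mul_apply, hAV]
  have hM : M = fromBlocks 0 0 0 M.toBlocks₂₂ := by
    have hM_top (k j) : M (Sum.inl k) j = 0 := by
      have hM_herm : M.IsHermitian := isHermitian_conjTranspose_mul_mul V hA
      rw [← hM_herm.apply, hM_left, star_zero]
    ext (i | i) (j | j) <;> simp [hM_left, hM_top, toBlocks₂₂]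
  have hA₂₂ : A.toBlocks₂₂ = V⁻¹.toBlocks₂₂ᴴ * M.toBlocks₂₂ * V⁻¹.toBlocks₂₂ := by
    calc A.toBlocks₂₂ = ((V * X)ᴴ * A * (V * X)).toBlocks₂₂ := by
          rw [mul_fromBlocks_nonsing_inv_eq hV,
            toBlocks₂₂_conjTranspose_mul_mul_fromBlocks_zero_one]
      _ = (Xᴴ * fromBlocks 0 0 0 M.toBlocks₂₂ * X).toBlocks₂₂ := by
          rw [← hM]
          simp only [M, conjTranspose_mul, Matrix.mul_assoc]
      _ = _ := toBlocks₂₂_conjTranspose_mul_fromBlocks_zero_mul X _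
  have hdet : V.det * V⁻¹.toBlocks₂₂.det = V.toBlocks₁₁.det := by
    have := congr_arg det (mul_fromBlocks_nonsing_inv_eq hV)
    rwa [det_mul, det_fromBlocks_zero₂₁, det_fromBlocks_zero₁₂, det_one, det_one, one_mul,
      mul_one] at this
  rw [hA₂₂, det_mul, det_mul, det_conjTranspose, ← hdet, star_mul']
  ring

end Matrix

theorem Matrix.norm_det_submatrix_equiv_equiv {R : Type*} [NormedCommRing R] [NormOneClass R]
    {m n : Type*} [Fintype m] [Fintype n] [DecidableEq m] [DecidableEq n]
    (e₁ e₂ : n ≃ m) (A : Matrix m m R) :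
    ‖(A.submatrix e₁ e₂).det‖ = ‖A.det‖ := by
  have hee : e₂ = e₁.trans (e₁.symm.trans e₂) := by ext; simp
  rw [hee]
  change ‖((A.submatrix id (e₁.symm.trans e₂)).submatrix e₁ e₁).det‖ = ‖A.det‖
  rw [det_submatrix_equiv_self, det_permute']
  rcases Int.units_eq_one_or (Equiv.Perm.sign (e₁.symm.trans e₂)) with h | h <;> simp [h]

theorem norm_det_vandermonde_fin_three (x y w : ℂ) :
    ‖(vandermonde ![x, y, w]).det‖ = ‖(x - y) * (x - w) * (y - w)‖ := by
  have : (vandermonde ![x, y, w]).det = -((x - y) * (x - w) * (y - w)) := by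
    simp [det_vandermonde, Fin.prod_univ_succ]
    ring
  rw [this, norm_neg]

section TripleSumCompl

variable {α : Type*} [DecidableEq α] {a b c : α}

noncomputable def tripleSumComplEquiv (hab : a ≠ b) (hac : a ≠ c) (hbc : b ≠ c) :
    Fin 3 ⊕ {i // i ≠ a ∧ i ≠ b ∧ i ≠ c} ≃ α :=
  (Equiv.sumCongr
      ((Equiv.ofInjective ![a, b, c] fun i j h => by
          fin_cases i <;> fin_cases j <;> simp_all [eq_comm]).trans
        (Equiv.subtypeEquivRight fun i => by simp [or_comm, or_left_comm, eq_comm]))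
      (Equiv.subtypeEquivRight fun i => by simp only [not_or])).trans
    (Equiv.sumCompl fun i => i = a ∨ i = b ∨ i = c)

variable (hab : a ≠ b) (hac : a ≠ c) (hbc : b ≠ c)

@[simp]
theorem tripleSumComplEquiv_inl (k : Fin 3) :
    tripleSumComplEquiv hab hac hbc (Sum.inl k) = ![a, b, c] k := rfl

@[simp]
theorem tripleSumComplEquiv_inr (i : {i // i ≠ a ∧ i ≠ b ∧ i ≠ c}) :
    tripleSumComplEquiv hab hac hbc (Sum.inr i) = i := rfl

end TripleSumCompl

section Minors

variable {N : ℕ} (z : Fin (N + 3) → ℂ) (D : Matrix (Fin (N + 3)) (Fin (N + 3)) ℂ)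

def highMonomialGram : Matrix (Fin N) (Fin N) ℂ :=
  ((vandermonde z)ᴴ * D * vandermonde z).submatrix (Fin.addNat · 3) (Fin.addNat · 3)

variable {z D}

theorem det_delMat_div_eq_det_highMonomialGram_div (hz : Function.Injective z)
    (hD : D.IsHermitian) (hψ : ∀ k : Fin 3, D *ᵥ (fun i => z i ^ (k : ℕ)) = 0)
    {a b c : Fin (N + 3)} (hab : a ≠ b) (hac : a ≠ c) (hbc : b ≠ c) :
    (delMat D a b c).det / ((‖(z a - z b) * (z a - z c) * (z b - z c)‖ ^ 2 : ℝ) : ℂ)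
      = (highMonomialGram z D).det / ((‖(vandermonde z).det‖ ^ 2 : ℝ) : ℂ) := by
  set p := tripleSumComplEquiv hab hac hbc
  have hcard : Fintype.card {i // i ≠ a ∧ i ≠ b ∧ i ≠ c} = N := by
    have := Fintype.card_congr p
    simp only [Fintype.card_sum, Fintype.card_fin] at this
    omega
  set e := Fintype.equivFinOfCardEq hcard
  set q : Fin 3 ⊕ {i // i ≠ a ∧ i ≠ b ∧ i ≠ c} ≃ Fin (N + 3) :=
    (Equiv.sumCongr (Equiv.refl _) e).trans (finSumFinEquiv.trans (finCongr (Nat.add_comm 3 N)))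
  set V := (vandermonde z).submatrix p q
  have hAV (i k) : (D.submatrix p p * V) i (Sum.inl k) = 0 := by
    rw [submatrix_mul_equiv]
    exact congr_fun (hψ k) (p i)
  have hV₁₁ : V.toBlocks₁₁ = vandermonde ![z a, z b, z c] := by
    ext i j
    fin_cases i <;> simp [V, p, q, toBlocks₁₁, vandermonde_apply]
  have hM : (Vᴴ * D.submatrix p p * V).toBlocks₂₂ = (highMonomialGram z D).submatrix e e := by
    ext i j
    simp [V, q, highMonomialGram, conjTranspose_submatrix, submatrix_mul_equiv, toBlocks₂₂]
  have hV : ‖V.det‖ = ‖(vandermonde z).det‖ := norm_det_submatrix_equiv_equiv p q _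
  have hW : (vandermonde z).det ≠ 0 := det_vandermonde_ne_zero_iff.2 hz
  have key := det_toBlocks₂₂_mul_star_det_mul_det (hD.submatrix p)
    (isUnit_iff_ne_zero.2 (norm_ne_zero_iff.1 (hV ▸ norm_ne_zero_iff.2 hW))) hAV
  rw [hV₁₁, hM, det_submatrix_equiv_self] at key
  simp only [Complex.star_def, Complex.conj_mul', hV, norm_det_vandermonde_fin_three] at key
  have hΔ : (z a - z b) * (z a - z c) * (z b - z c) ≠ 0 := by
    simp [sub_eq_zero, hz.ne, hab, hac, hbc]
  rw [div_eq_div_iff (by simpa using hΔ) (by simpa using hW)]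
  push_cast
  exact key

end Minors

/-- For a positive semidefinite Hermitian `(N+3)×(N+3)` matrix `D` whose right
null space is exactly spanned by the vectors `(z_i^{a−1})`, `a = 1,2,3`, the
ratio `det(D_{\{a,b,c\}})/|Δ3(z_a,z_b,z_c)|²` is independent of the choice of
the three deleted indices. -/
theorem stmt18 (N : ℕ) (z : Fin (N + 3) → ℂ) (hz : Function.Injective z)
    (D : Matrix (Fin (N + 3)) (Fin (N + 3)) ℂ) (hD : D.PosSemidef)
    (hker : ∀ v : Fin (N + 3) → ℂ, D.mulVec v = 0 ↔
      v ∈ Submodule.span ℂ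
        ({fun _ => (1 : ℂ), fun i => z i, fun i => (z i) ^ 2} : Set (Fin (N + 3) → ℂ)))
    (a b c a' b' c' : Fin (N + 3))
    (hab : a ≠ b) (hac : a ≠ c) (hbc : b ≠ c)
    (hab' : a' ≠ b') (hac' : a' ≠ c') (hbc' : b' ≠ c') :
    (delMat D a b c).det /
        ((‖(z a - z b) * (z a - z c) * (z b - z c)‖ ^ 2 : ℝ) : ℂ)
      = (delMat D a' b' c').det /
        ((‖(z a' - z b') * (z a' - z c') * (z b' - z c')‖ ^ 2 : ℝ) : ℂ) := by
  have hψ (k : Fin 3) : D *ᵥ (fun i => z i ^ (k : ℕ)) = 0 :=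
    (hker _).2 (Submodule.subset_span (by fin_cases k <;> simp))
  rw [det_delMat_div_eq_det_highMonomialGram_div hz hD.isHermitian hψ hab hac hbc,
    det_delMat_div_eq_det_highMonomialGram_div hz hD.isHermitian hψ hab' hac' hbc']
end
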